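/- There exists an equivalent non-symmetric norm |||·||| on c₀ (i.e., a gauge of a bounded closed convex body containing 0 in its interior) such that every point of its unit sphere is a strongly extreme point of the unit ball C, but every nonempty open slice of C has ‖·‖_∞-diameter at least 1/√2; in particular no point of the unit sphere is denting. -/

import Mathlib

open Filter Topology BoundedContinuousFunction Metric

/-!
`asymNorm` is the paper's `‖·‖ = sup_j Q(·, j)`, `‖weightedL2 ·‖` its `q`, and `tripleNorm` its
`|||·|||`.

Strong extremality: if `y n`, `z n` lie in the ball and their midpoints tend to a point `x` of
the sphere, the parallelogram law for the Hilbertian part `q` forces `q (y n - z n) → 0`; hence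
`y n → x` coordinatewise and `limsup asymNorm (y n) ≤ asymNorm x`. A finite chain almost
realizing `asymNorm x` then caps `y n k` from above for all large `k`, since appending `k` to the
chain may not exceed `asymNorm (y n)`. The same holds for `z n`, and `y n k + z n k ≈ 2 x k ≈ 0`
there, so `y n - z n` is uniformly small.

Large slices: shrink a point of a slice into the open ball and lower its `n`-th coordinate by
`t`. For large `n` the functional hardly changes, `q` hardly changes, and `asymNorm` grows to at
most about `t`, because only chains starting at `n` see the lowered coordinate, through their
absolute-value term. As `q² ≤ ‖·‖_∞² ≤ asymNorm²`, we have `q² < 1/2` inside the ball, which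
leaves room for every `t < 1/√2`.
-/

noncomputable section

namespace C0Gauge

open Finset

lemma sum_Ioc_half_pow_le (a b : ℕ) : ∑ k ∈ Ioc a b, (1/2 : ℝ) ^ k ≤ (1/2) ^ a := by
  rcases le_or_gt a b with hab | hab
  · suffices ∑ k ∈ Ioc a b, (1/2 : ℝ) ^ k = (1/2) ^ a - (1/2) ^ b by
      rw [this]; linarith [pow_pos (by norm_num : (0:ℝ) < 1/2) b]
    induction b, hab using Nat.le_induction with
    | base => simp
    | succ b hab ih => rw [sum_Ioc_succ_top hab, ih]; ring
  · simp [Ioc_eq_empty_of_le hab.le]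

lemma sum_Ioc_half_pow_mul_max_le {a b : ℕ} {g : ℕ → ℝ} {B : ℝ} (hB : 0 ≤ B)
    (hg : ∀ k ∈ Ioc a b, g k ≤ B) :
    ∑ k ∈ Ioc a b, (1/2 : ℝ) ^ k * max (g k) 0 ≤ (1/2) ^ a * B :=
  calc ∑ k ∈ Ioc a b, (1/2 : ℝ) ^ k * max (g k) 0
      ≤ ∑ k ∈ Ioc a b, (1/2 : ℝ) ^ k * B :=
        sum_le_sum fun k hk => by gcongr; exact max_le (hg k hk) hB
    _ = (∑ k ∈ Ioc a b, (1/2 : ℝ) ^ k) * B := (sum_mul ..).symm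
    _ ≤ (1/2) ^ a * B := by gcongr; exact sum_Ioc_half_pow_le a b

/-- The chain `j 0 < j 1 < ⋯ < j m` is encoded by the first `m + 1` values of a strictly
monotone `j : ℕ → ℕ`. -/
def Q (x : ℕ →ᵇ ℝ) (j : ℕ → ℕ) (m : ℕ) : ℝ :=
  |x (j 0)| + ∑ k ∈ Ioc 0 m, (1/2 : ℝ) ^ k * max (x (j k)) 0

lemma Q_le_add {x : ℕ →ᵇ ℝ} {j : ℕ → ℕ} {m : ℕ} {A B : ℝ} (hA : |x (j 0)| ≤ A) (hB : 0 ≤ B)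
    (hx : ∀ k ∈ Ioc 0 m, x (j k) ≤ B) : Q x j m ≤ A + B := by
  have := sum_Ioc_half_pow_mul_max_le hB hx
  rw [pow_zero, one_mul] at this
  exact add_le_add hA this

lemma Q_add_le (x y : ℕ →ᵇ ℝ) (j : ℕ → ℕ) (m : ℕ) : Q (x + y) j m ≤ Q x j m + Q y j m := by
  rw [Q, Q, Q, add_add_add_comm, ← sum_add_distrib]
  refine add_le_add (abs_add_le _ _) (sum_le_sum fun k _ => ?_)
  rw [← mul_add]
  gcongr
  exact max_le (add_le_add (le_max_left _ _) (le_max_left _ _)) (by positivity)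

lemma Q_smul (x : ℕ →ᵇ ℝ) (j : ℕ → ℕ) (m : ℕ) {t : ℝ} (ht : 0 ≤ t) :
    Q (t • x) j m = t * Q x j m := by
  simp only [Q, BoundedContinuousFunction.coe_smul, smul_eq_mul, abs_mul, abs_of_nonneg ht,
    mul_add, mul_sum]
  congr 1
  refine sum_congr rfl fun k _ => ?_
  rw [mul_left_comm, mul_max_of_nonneg _ _ ht, mul_zero]

lemma Q_le_two_mul_norm (x : ℕ →ᵇ ℝ) (j : ℕ → ℕ) (m : ℕ) : Q x j m ≤ 2 * ‖x‖ := by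
  have h : ∀ i, |x i| ≤ ‖x‖ := fun i => by simpa using x.norm_coe_le_norm i
  linarith [Q_le_add (m := m) (h (j 0)) (norm_nonneg x) fun k _ => (le_abs_self _).trans (h (j k))]

abbrev Chain := {j : ℕ → ℕ // StrictMono j} × ℕ

instance : Nonempty Chain := ⟨(⟨id, strictMono_id⟩, 0)⟩

def asymNorm (x : ℕ →ᵇ ℝ) : ℝ := ⨆ c : Chain, Q x c.1 c.2

lemma bddAbove_range_Q (x : ℕ →ᵇ ℝ) : BddAbove (Set.range fun c : Chain => Q x c.1 c.2) :=
  ⟨2 * ‖x‖, by rintro _ ⟨c, rfl⟩; exact Q_le_two_mul_norm x _ _⟩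

lemma Q_le_asymNorm (x : ℕ →ᵇ ℝ) {j : ℕ → ℕ} (hj : StrictMono j) (m : ℕ) :
    Q x j m ≤ asymNorm x :=
  le_ciSup (bddAbove_range_Q x) (⟨j, hj⟩, m)

lemma exists_lt_Q {x : ℕ →ᵇ ℝ} {r : ℝ} (hr : r < asymNorm x) :
    ∃ j m, StrictMono j ∧ r < Q x j m := by
  obtain ⟨⟨j, m⟩, h⟩ := exists_lt_of_lt_ciSup hr
  exact ⟨j, m, j.2, h⟩

lemma asymNorm_le_of_forall_Q_le {x : ℕ →ᵇ ℝ} {r : ℝ}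
    (h : ∀ j m, StrictMono j → Q x j m ≤ r) : asymNorm x ≤ r :=
  ciSup_le fun c => h c.1 c.2 c.1.2

lemma asymNorm_le_two_mul_norm (x : ℕ →ᵇ ℝ) : asymNorm x ≤ 2 * ‖x‖ :=
  asymNorm_le_of_forall_Q_le fun j m _ => Q_le_two_mul_norm x j m

lemma abs_apply_le_asymNorm (x : ℕ →ᵇ ℝ) (i : ℕ) : |x i| ≤ asymNorm x := by
  simpa [Q] using Q_le_asymNorm x (strictMono_id.const_add i) 0

lemma asymNorm_nonneg (x : ℕ →ᵇ ℝ) : 0 ≤ asymNorm x :=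
  (abs_nonneg _).trans (abs_apply_le_asymNorm x 0)

lemma norm_le_asymNorm (x : ℕ →ᵇ ℝ) : ‖x‖ ≤ asymNorm x :=
  (norm_le (asymNorm_nonneg x)).2 fun i => abs_apply_le_asymNorm x i

lemma asymNorm_add_le (x y : ℕ →ᵇ ℝ) : asymNorm (x + y) ≤ asymNorm x + asymNorm y :=
  asymNorm_le_of_forall_Q_le fun j m hj =>
    (Q_add_le x y j m).trans (add_le_add (Q_le_asymNorm x hj m) (Q_le_asymNorm y hj m))

lemma asymNorm_smul (x : ℕ →ᵇ ℝ) {t : ℝ} (ht : 0 ≤ t) : asymNorm (t • x) = t * asymNorm x := by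
  simp only [asymNorm, Q_smul _ _ _ ht, Real.mul_iSup_of_nonneg ht]

def extend (j : ℕ → ℕ) (m k : ℕ) (i : ℕ) : ℕ := if i ≤ m then j i else k + (i - (m + 1))

lemma strictMono_extend {j : ℕ → ℕ} (hj : StrictMono j) {m k : ℕ} (hk : j m < k) :
    StrictMono (extend j m k) := by
  intro a b hab
  unfold extend
  by_cases hb : b ≤ m
  · rw [if_pos (hab.le.trans hb), if_pos hb]; exact hj hab
  · by_cases ha : a ≤ m
    · rw [if_pos ha, if_neg hb]; have := hj.monotone ha; omega
    · rw [if_neg ha, if_neg hb]; omega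

lemma Q_extend (x : ℕ →ᵇ ℝ) (j : ℕ → ℕ) (m k : ℕ) :
    Q x (extend j m k) (m + 1) = Q x j m + (1/2 : ℝ) ^ (m + 1) * max (x k) 0 := by
  have hlast : extend j m k (m + 1) = k := by simp [extend]
  have hinit : ∀ i ≤ m, extend j m k i = j i := fun i hi => if_pos hi
  rw [Q, sum_Ioc_succ_top (Nat.zero_le m), hlast, hinit 0 (Nat.zero_le m),
    sum_congr rfl fun i hi => by rw [hinit i (mem_Ioc.1 hi).2], ← add_assoc, Q]

lemma half_pow_mul_apply_le_asymNorm_sub_Q (x : ℕ →ᵇ ℝ) {j : ℕ → ℕ} (hj : StrictMono j)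
    {m k : ℕ} (hk : j m < k) : (1/2 : ℝ) ^ (m + 1) * x k ≤ asymNorm x - Q x j m := by
  have := Q_le_asymNorm x (strictMono_extend hj hk) (m + 1)
  rw [Q_extend] at this
  have : (1/2 : ℝ) ^ (m + 1) * x k ≤ (1/2) ^ (m + 1) * max (x k) 0 := by
    gcongr; exact le_max_left _ _
  linarith

/-- Take a chain within `2^{-(N+1)} c / 2` of `asymNorm x`, where `x < c / 8` beyond `N`, and
cut it at length `m' = min m N`: as `j k ≥ k`, the discarded terms cost at most `2^{-m'} c / 8`. -/
lemma exists_Q_gt_asymNorm_sub {x : ℕ →ᵇ ℝ} (hx : Tendsto x atTop (𝓝 0)) {c : ℝ} (hc : 0 < c) :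
    ∃ j m, StrictMono j ∧ asymNorm x - (1/2 : ℝ) ^ (m + 1) * c < Q x j m := by
  obtain ⟨N, hN⟩ := eventually_atTop.1 (hx.eventually (gt_mem_nhds (by positivity : 0 < c / 8)))
  obtain ⟨j, m, hj, hjm⟩ :=
    exists_lt_Q (sub_lt_self (asymNorm x) (by positivity : 0 < (1/2 : ℝ) ^ (N + 1) * c / 2))
  refine ⟨j, min m N, hj, ?_⟩
  have htail : ∑ k ∈ Ioc (min m N) m, (1/2 : ℝ) ^ k * max (x (j k)) 0 ≤
      (1/2) ^ min m N * (c / 8) :=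
    sum_Ioc_half_pow_mul_max_le (by positivity) fun k hk =>
      (hN _ ((show N ≤ k by have := mem_Ioc.1 hk; omega).trans hj.le_apply)).le
  have hsplit : Q x j m =
      Q x j (min m N) + ∑ k ∈ Ioc (min m N) m, (1/2 : ℝ) ^ k * max (x (j k)) 0 := by
    rw [Q, Q, add_assoc, sum_Ioc_consecutive _ (Nat.zero_le _) (min_le_left m N)]
  have hpow : (1/2 : ℝ) ^ (N + 1) * c ≤ (1/2) ^ (min m N + 1) * c :=
    mul_le_mul_of_nonneg_right (pow_le_pow_of_le_one (by norm_num) (by norm_num) (by omega)) hc.le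
  have hhalf : (1/2 : ℝ) ^ min m N * (c / 8) = (1/2) ^ (min m N + 1) * c / 4 := by ring
  have hpos : 0 < (1/2 : ℝ) ^ (min m N + 1) * c := by positivity
  linarith

def single (n : ℕ) : ℕ →ᵇ ℝ :=
  ofNormedAddCommGroupDiscrete (Pi.single n 1) 1 fun k => by
    rcases eq_or_ne k n with rfl | h <;> simp [*]

lemma single_apply (n k : ℕ) : single n k = if k = n then 1 else 0 := by
  simp [single, Pi.single_apply]

lemma norm_smul_single {t : ℝ} (ht : 0 ≤ t) (n : ℕ) : ‖t • single n‖ = t := by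
  refine le_antisymm ((norm_le ht).2 fun k => ?_) ?_
  · rcases eq_or_ne k n with rfl | h <;> simp [single_apply, abs_of_nonneg ht, *]
  · simpa [single_apply, abs_of_nonneg ht] using (t • single n).norm_coe_le_norm n

lemma sub_smul_single_apply (u : ℕ →ᵇ ℝ) (t : ℝ) (n k : ℕ) :
    (u - t • single n) k = if k = n then u n - t else u k := by
  rcases eq_or_ne k n with rfl | h <;> simp [single_apply, *]

lemma asymNorm_sub_smul_single_le {u : ℕ →ᵇ ℝ} {t δ : ℝ} {n : ℕ} (ht : 0 ≤ t)
    (hu : ∀ k ≥ n, |u k| ≤ δ) : asymNorm (u - t • single n) ≤ max (asymNorm u) (t + 2 * δ) := by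
  have hδ : 0 ≤ δ := (abs_nonneg _).trans (hu n le_rfl)
  refine asymNorm_le_of_forall_Q_le fun j m hj => ?_
  by_cases h0 : j 0 = n
  · refine le_max_of_le_right ?_
    suffices Q (u - t • single n) j m ≤ (t + δ) + δ by linarith
    refine Q_le_add ?_ hδ fun k hk => ?_
    · rw [sub_smul_single_apply, if_pos h0]
      linarith [abs_sub (u n) t, abs_of_nonneg ht, hu n le_rfl]
    · have hk : n < j k := h0 ▸ hj (mem_Ioc.1 hk).1
      rw [sub_smul_single_apply, if_neg hk.ne']
      exact (le_abs_self _).trans (hu _ hk.le)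
  · refine le_max_of_le_left ((?_ : Q _ j m ≤ Q u j m).trans (Q_le_asymNorm u hj m))
    rw [Q, Q, sub_smul_single_apply, if_neg h0]
    gcongr with k
    rw [sub_smul_single_apply]
    split_ifs with h
    · rw [h]; linarith
    · rfl

/-- The paper's weight `2⁻ᵏ` for `k ≥ 1`, shifted to start at index `0`. -/
def weight (k : ℕ) : ℝ := (1/2) ^ (k + 1)

lemma weight_pos (k : ℕ) : 0 < weight k := by unfold weight; positivity

lemma hasSum_weight : HasSum weight 1 := by
  convert hasSum_geometric_two' 1 using 1
  ext k
  simp [weight, pow_succ, div_eq_mul_inv, mul_comm]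

lemma sq_apply_le_sq_norm (x : ℕ →ᵇ ℝ) (k : ℕ) : x k ^ 2 ≤ ‖x‖ ^ 2 :=
  sq_le_sq.2 (by simpa using x.norm_coe_le_norm k)

lemma weight_mul_sq_le (x : ℕ →ᵇ ℝ) (k : ℕ) : weight k * x k ^ 2 ≤ weight k * ‖x‖ ^ 2 :=
  mul_le_mul_of_nonneg_left (sq_apply_le_sq_norm x k) (weight_pos k).le

lemma summable_weight_mul_sq (x : ℕ →ᵇ ℝ) : Summable fun k => weight k * x k ^ 2 :=
  (hasSum_weight.summable.mul_right _).of_nonneg_of_le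
    (fun k => mul_nonneg (weight_pos k).le (sq_nonneg _)) (weight_mul_sq_le x)

def weightedL2 : (ℕ →ᵇ ℝ) →ₗ[ℝ] lp (fun _ : ℕ => ℝ) 2 where
  toFun x := ⟨fun k => √(weight k) * x k, memℓp_gen <| by
    simpa [mul_pow, Real.sq_sqrt (weight_pos _).le] using summable_weight_mul_sq x⟩
  map_add' x y := by ext k; exact mul_add _ _ _
  map_smul' t x := by ext k; simp [mul_left_comm]

lemma weightedL2_apply (x : ℕ →ᵇ ℝ) (k : ℕ) : weightedL2 x k = √(weight k) * x k := rfl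

lemma norm_weightedL2_sq (x : ℕ →ᵇ ℝ) : ‖weightedL2 x‖ ^ 2 = ∑' k, weight k * x k ^ 2 := by
  have := lp.norm_rpow_eq_tsum (p := 2) (by norm_num) (weightedL2 x)
  simpa [weightedL2_apply, mul_pow, Real.sq_sqrt (weight_pos _).le] using this

lemma norm_weightedL2_le (x : ℕ →ᵇ ℝ) : ‖weightedL2 x‖ ≤ ‖x‖ := by
  refine (sq_le_sq₀ (norm_nonneg _) (norm_nonneg x)).1 ?_
  rw [norm_weightedL2_sq]
  calc ∑' k, weight k * x k ^ 2 ≤ ∑' k, weight k * ‖x‖ ^ 2 :=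
        (summable_weight_mul_sq x).tsum_le_tsum (weight_mul_sq_le x)
          (hasSum_weight.summable.mul_right _)
    _ = ‖x‖ ^ 2 := by rw [tsum_mul_right, hasSum_weight.tsum_eq, one_mul]

lemma sqrt_weight_mul_abs_le (x : ℕ →ᵇ ℝ) (k : ℕ) : √(weight k) * |x k| ≤ ‖weightedL2 x‖ := by
  simpa [weightedL2_apply, abs_mul, abs_of_nonneg (Real.sqrt_nonneg _)] using
    lp.norm_apply_le_norm two_ne_zero (weightedL2 x) k

lemma norm_weightedL2_single (n : ℕ) : ‖weightedL2 (single n)‖ = √(weight n) := by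
  rw [← Real.sqrt_sq (norm_nonneg _), norm_weightedL2_sq]
  congr 1
  simp [single_apply]

def tripleNorm (x : ℕ →ᵇ ℝ) : ℝ := √(asymNorm x ^ 2 + ‖weightedL2 x‖ ^ 2)

lemma tripleNorm_nonneg (x : ℕ →ᵇ ℝ) : 0 ≤ tripleNorm x := Real.sqrt_nonneg _

lemma tripleNorm_sq (x : ℕ →ᵇ ℝ) : tripleNorm x ^ 2 = asymNorm x ^ 2 + ‖weightedL2 x‖ ^ 2 :=
  Real.sq_sqrt (by positivity)

lemma tripleNorm_le_sqrt {x : ℕ →ᵇ ℝ} {a b : ℝ} (ha : asymNorm x ≤ a) (hb : ‖weightedL2 x‖ ≤ b) :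
    tripleNorm x ≤ √(a ^ 2 + b ^ 2) :=
  Real.sqrt_le_sqrt (add_le_add (pow_le_pow_left₀ (asymNorm_nonneg x) ha 2)
    (pow_le_pow_left₀ (norm_nonneg _) hb 2))

lemma sqrt_add_sq_add_sq_le (a b c d : ℝ) :
    √((a + b) ^ 2 + (c + d) ^ 2) ≤ √(a ^ 2 + c ^ 2) + √(b ^ 2 + d ^ 2) := by
  have hcs : a * b + c * d ≤ √(a ^ 2 + c ^ 2) * √(b ^ 2 + d ^ 2) := by
    rw [← Real.sqrt_mul (by positivity)]
    exact Real.le_sqrt_of_sq_le (by nlinarith [sq_nonneg (a * d - b * c)])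
  rw [Real.sqrt_le_left (by positivity)]
  nlinarith [Real.sq_sqrt (by positivity : 0 ≤ a ^ 2 + c ^ 2),
    Real.sq_sqrt (by positivity : 0 ≤ b ^ 2 + d ^ 2)]

lemma tripleNorm_add_le (x y : ℕ →ᵇ ℝ) : tripleNorm (x + y) ≤ tripleNorm x + tripleNorm y :=
  (tripleNorm_le_sqrt (asymNorm_add_le x y) (by rw [map_add]; exact norm_add_le _ _)).trans
    (sqrt_add_sq_add_sq_le _ _ _ _)

lemma tripleNorm_smul (x : ℕ →ᵇ ℝ) {t : ℝ} (ht : 0 ≤ t) :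
    tripleNorm (t • x) = t * tripleNorm x := by
  rw [tripleNorm, tripleNorm, asymNorm_smul x ht, map_smul, norm_smul, Real.norm_of_nonneg ht,
    mul_pow, mul_pow, ← mul_add, Real.sqrt_mul (sq_nonneg t), Real.sqrt_sq ht]

lemma norm_le_tripleNorm (x : ℕ →ᵇ ℝ) : ‖x‖ ≤ tripleNorm x :=
  Real.le_sqrt_of_sq_le <| by
    nlinarith [norm_le_asymNorm x, norm_nonneg x, sq_nonneg ‖weightedL2 x‖]

lemma tripleNorm_le_three_mul_norm (x : ℕ →ᵇ ℝ) : tripleNorm x ≤ 3 * ‖x‖ :=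
  (tripleNorm_le_sqrt (asymNorm_le_two_mul_norm x) (norm_weightedL2_le x)).trans <|
    (Real.sqrt_le_left (by positivity)).2 (by nlinarith [norm_nonneg x])

lemma tendsto_tripleNorm {x : ℕ →ᵇ ℝ} {u : ℕ → ℕ →ᵇ ℝ}
    (hu : Tendsto (fun n => ‖x - u n‖) atTop (𝓝 0)) :
    Tendsto (fun n => tripleNorm (u n)) atTop (𝓝 (tripleNorm x)) := by
  have hle : ∀ v w : ℕ →ᵇ ℝ, tripleNorm v ≤ tripleNorm w + 3 * ‖v - w‖ := fun v w =>
    calc tripleNorm v = tripleNorm (w + (v - w)) := by rw [add_sub_cancel]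
      _ ≤ tripleNorm w + 3 * ‖v - w‖ :=
        (tripleNorm_add_le _ _).trans (add_le_add_right (tripleNorm_le_three_mul_norm _) _)
  refine tendsto_iff_norm_sub_tendsto_zero.2 <| squeeze_zero (fun _ => norm_nonneg _)
    (fun n => ?_) (by simpa using hu.const_mul 3)
  rw [Real.norm_eq_abs, abs_sub_le_iff]
  exact ⟨by linarith [hle (u n) x, norm_sub_rev (u n) x], by linarith [hle x (u n)]⟩

lemma norm_weightedL2_sub_sq_le {y z : ℕ →ᵇ ℝ} (hy : tripleNorm y ≤ 1) (hz : tripleNorm z ≤ 1) :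
    ‖weightedL2 (y - z)‖ ^ 2 ≤ 4 * (1 - tripleNorm ((1/2 : ℝ) • (y + z)) ^ 2) := by
  have hpar := parallelogram_law_with_norm ℝ (weightedL2 y) (weightedL2 z)
  rw [← map_add, ← map_sub] at hpar
  have hmid : 4 * tripleNorm ((1/2 : ℝ) • (y + z)) ^ 2 = tripleNorm (y + z) ^ 2 := by
    rw [tripleNorm_smul _ (by norm_num)]; ring
  have hN : asymNorm (y + z) ^ 2 ≤ (asymNorm y + asymNorm z) ^ 2 :=
    pow_le_pow_left₀ (asymNorm_nonneg _) (asymNorm_add_le y z) 2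
  have hy2 := pow_le_one₀ (tripleNorm_nonneg _) hy (n := 2)
  have hz2 := pow_le_one₀ (tripleNorm_nonneg _) hz (n := 2)
  rw [tripleNorm_sq] at hy2 hz2
  rw [tripleNorm_sq (y + z)] at hmid
  nlinarith [sq_nonneg (asymNorm y - asymNorm z)]

section Midpoints

variable {x : ℕ →ᵇ ℝ} {y z : ℕ → ℕ →ᵇ ℝ}

lemma tendsto_norm_weightedL2_sub (hx : tripleNorm x = 1) (hy : ∀ n, tripleNorm (y n) ≤ 1)
    (hz : ∀ n, tripleNorm (z n) ≤ 1)
    (hmid : Tendsto (fun n => ‖x - (1/2 : ℝ) • (y n + z n)‖) atTop (𝓝 0)) :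
    Tendsto (fun n => ‖weightedL2 (y n - z n)‖) atTop (𝓝 0) := by
  have hsq : Tendsto (fun n => ‖weightedL2 (y n - z n)‖ ^ 2) atTop (𝓝 0) :=
    squeeze_zero (fun _ => sq_nonneg _) (fun n => norm_weightedL2_sub_sq_le (hy n) (hz n))
      (by simpa [hx] using (((tendsto_tripleNorm hmid).pow 2).const_sub 1).const_mul 4)
  simpa using hsq.sqrt

lemma tendsto_norm_weightedL2_sub_of_midpoint
    (hyz : Tendsto (fun n => ‖weightedL2 (y n - z n)‖) atTop (𝓝 0))
    (hmid : Tendsto (fun n => ‖x - (1/2 : ℝ) • (y n + z n)‖) atTop (𝓝 0)) :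
    Tendsto (fun n => ‖weightedL2 (y n - x)‖) atTop (𝓝 0) := by
  refine squeeze_zero (g := fun n => ‖weightedL2 (y n - z n)‖ / 2 + ‖x - (1/2 : ℝ) • (y n + z n)‖)
    (fun _ => norm_nonneg _) (fun n => ?_) (by simpa using (hyz.div_const 2).add hmid)
  have hsplit : y n - x = (1/2 : ℝ) • (y n - z n) + ((1/2 : ℝ) • (y n + z n) - x) := by module
  rw [hsplit, map_add, map_smul]
  refine (norm_add_le _ _).trans (add_le_add (le_of_eq ?_) ?_)
  · rw [norm_smul]; norm_num; ring
  · exact (norm_weightedL2_le _).trans (norm_sub_rev _ _).le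

lemma tendsto_apply_of_norm_weightedL2_sub
    (h : Tendsto (fun n => ‖weightedL2 (y n - x)‖) atTop (𝓝 0)) (i : ℕ) :
    Tendsto (fun n => y n i) atTop (𝓝 (x i)) := by
  refine tendsto_iff_norm_sub_tendsto_zero.2 <| squeeze_zero (fun _ => norm_nonneg _)
    (fun n => ?_) (by simpa using h.div_const √(weight i))
  rw [le_div_iff₀ (Real.sqrt_pos.2 (weight_pos i)), mul_comm]
  simpa using sqrt_weight_mul_abs_le (y n - x) i

lemma eventually_asymNorm_le (hx : tripleNorm x = 1) (hy : ∀ n, tripleNorm (y n) ≤ 1)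
    (h : Tendsto (fun n => ‖weightedL2 (y n - x)‖) atTop (𝓝 0)) {η : ℝ} (hη : 0 < η) :
    ∀ᶠ n in atTop, asymNorm (y n) ≤ asymNorm x + η := by
  have hW : Tendsto (fun n => ‖weightedL2 (y n)‖) atTop (𝓝 ‖weightedL2 x‖) :=
    (tendsto_iff_norm_sub_tendsto_zero.2 (by simpa using h)).norm
  have hx2 : 1 - ‖weightedL2 x‖ ^ 2 < (asymNorm x + η) ^ 2 := by
    have := tripleNorm_sq x
    rw [hx] at this
    nlinarith [asymNorm_nonneg x]
  filter_upwards [((hW.pow 2).const_sub 1).eventually (gt_mem_nhds hx2)] with n hn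
  have := tripleNorm_sq (y n)
  have := pow_le_one₀ (tripleNorm_nonneg _) (hy n) (n := 2)
  exact (lt_of_pow_lt_pow_left₀ 2 (by linarith [asymNorm_nonneg x]) (by linarith)).le

lemma tendsto_Q (hy : ∀ i, Tendsto (fun n => y n i) atTop (𝓝 (x i))) (j : ℕ → ℕ) (m : ℕ) :
    Tendsto (fun n => Q (y n) j m) atTop (𝓝 (Q x j m)) :=
  (hy _).abs.add <| tendsto_finsetSum _ fun _ _ => ((hy _).max tendsto_const_nhds).const_mul _

lemma exists_eventually_apply_le (hx : Tendsto x atTop (𝓝 0))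
    (hy : ∀ i, Tendsto (fun n => y n i) atTop (𝓝 (x i)))
    (hN : ∀ η > 0, ∀ᶠ n in atTop, asymNorm (y n) ≤ asymNorm x + η) {ε : ℝ} (hε : 0 < ε) :
    ∃ K, ∀ᶠ n in atTop, ∀ k, K < k → y n k ≤ ε := by
  obtain ⟨j, m, hj, hQ⟩ := exists_Q_gt_asymNorm_sub hx (half_pos hε)
  have hW : 0 < (1/2 : ℝ) ^ (m + 1) := by positivity
  refine ⟨j m, ?_⟩
  filter_upwards [(tendsto_Q hy j m).eventually (lt_mem_nhds hQ),
    hN _ (mul_pos hW (half_pos hε))] with n hQn hNn k hk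
  have := half_pow_mul_apply_le_asymNorm_sub_Q (y n) hj hk
  exact le_of_mul_le_mul_left (by linarith) hW

end Midpoints

theorem tendsto_norm_sub_of_midpoint {x : ℕ →ᵇ ℝ} (hx0 : Tendsto x atTop (𝓝 0))
    (hx : tripleNorm x = 1) {y z : ℕ → ℕ →ᵇ ℝ} (hy : ∀ n, tripleNorm (y n) ≤ 1)
    (hz : ∀ n, tripleNorm (z n) ≤ 1)
    (hmid : Tendsto (fun n => ‖x - (1/2 : ℝ) • (y n + z n)‖) atTop (𝓝 0)) :
    Tendsto (fun n => ‖y n - z n‖) atTop (𝓝 0) := by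
  have hyz := tendsto_norm_weightedL2_sub hx hy hz hmid
  have hyx := tendsto_norm_weightedL2_sub_of_midpoint hyz hmid
  have hzx := tendsto_norm_weightedL2_sub_of_midpoint (y := z) (z := y)
    (hyz.congr fun n => by rw [← norm_neg, ← map_neg, neg_sub])
    (by simpa only [add_comm] using hmid)
  refine tendsto_order.2 ⟨fun a ha => .of_forall fun n => ha.trans_le (norm_nonneg _),
    fun ε hε => ?_⟩
  obtain ⟨Ky, hKy⟩ := exists_eventually_apply_le hx0 (tendsto_apply_of_norm_weightedL2_sub hyx)
    (fun η => eventually_asymNorm_le hx hy hyx) (by positivity : 0 < ε / 8)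
  obtain ⟨Kz, hKz⟩ := exists_eventually_apply_le hx0 (tendsto_apply_of_norm_weightedL2_sub hzx)
    (fun η => eventually_asymNorm_le hx hz hzx) (by positivity : 0 < ε / 8)
  obtain ⟨Kx, hKx⟩ := eventually_atTop.1 <|
    (by simpa using hx0.abs : Tendsto (fun k => |x k|) atTop (𝓝 0)).eventually
      (gt_mem_nhds (by positivity : 0 < ε / 16))
  set K := max (max Ky Kz) Kx
  have hhead : ∀ᶠ n in atTop, ∀ k ∈ Finset.range (K + 1), |y n k - z n k| < ε / 2 := by
    refine (Finset.eventually_all _).2 fun k _ => ?_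
    have := ((tendsto_apply_of_norm_weightedL2_sub hyx k).sub
      (tendsto_apply_of_norm_weightedL2_sub hzx k)).abs
    rw [sub_self, abs_zero] at this
    exact this.eventually (gt_mem_nhds (by positivity))
  filter_upwards [hKy, hKz, hhead, hmid.eventually (gt_mem_nhds (by positivity : 0 < ε / 16))]
    with n hyn hzn hhn hmn
  refine ((norm_le (by positivity)).2 fun k => ?_).trans_lt (half_lt_self hε)
  rw [Real.norm_eq_abs, BoundedContinuousFunction.coe_sub, Pi.sub_apply]
  rcases le_or_gt k K with hk | hk
  · exact (hhn k (Finset.mem_range.2 (by omega))).le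
  · have hmk : |x k - (y n k + z n k) / 2| ≤ ‖x - (1/2 : ℝ) • (y n + z n)‖ := by
      simpa [div_eq_inv_mul, mul_add] using (x - (1/2 : ℝ) • (y n + z n)).norm_coe_le_norm k
    obtain ⟨hxl, hxu⟩ := abs_lt.1 (hKx k (by omega))
    obtain ⟨hml, hmu⟩ := abs_le.1 hmk
    have := hyn k (by omega)
    have := hzn k (by omega)
    exact abs_le.2 ⟨by linarith, by linarith⟩

def slice (f : ℕ → ℝ) (a : ℝ) : Set (ℕ →ᵇ ℝ) :=
  {u | (Tendsto u atTop (𝓝 0) ∧ tripleNorm u ≤ 1) ∧ a < ∑' n, f n * u n}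

lemma tendsto_sub_smul_single {u : ℕ →ᵇ ℝ} (hu : Tendsto u atTop (𝓝 0)) (t : ℝ) (n : ℕ) :
    Tendsto (u - t • single n) atTop (𝓝 0) :=
  hu.congr' <| eventually_atTop.2 ⟨n + 1, fun k hk => by
    rw [sub_smul_single_apply, if_neg (by omega)]⟩

lemma tsum_mul_sub_smul_single {f : ℕ → ℝ} (hf : Summable fun n => |f n|) (u : ℕ →ᵇ ℝ)
    (t : ℝ) (n : ℕ) :
    ∑' k, f k * (u - t • single n) k = ∑' k, f k * u k - t * f n := by
  have hfu : Summable fun k => f k * u k :=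
    (hf.mul_right ‖u‖).of_norm_bounded fun k => by
      rw [norm_mul, Real.norm_eq_abs]; gcongr; exact u.norm_coe_le_norm k
  have hsplit : (fun k => f k * (u - t • single n) k) =
      fun k => f k * u k - if k = n then t * f n else 0 := by
    ext k
    rw [sub_smul_single_apply]
    split_ifs with h
    · rw [h]; ring
    · ring
  rw [hsplit, hfu.tsum_sub (summable_of_ne_finset_zero (s := {n}) (by simp_all)), tsum_ite_eq]

lemma eventually_tripleNorm_sub_smul_single_le_one {w : ℕ →ᵇ ℝ} (hw : Tendsto w atTop (𝓝 0))
    (hw1 : tripleNorm w < 1) {t : ℝ} (ht0 : 0 ≤ t) (ht : t ^ 2 < 1/2) :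
    ∀ᶠ n in atTop, tripleNorm (w - t • single n) ≤ 1 := by
  set q := ‖weightedL2 w‖
  have hw2 : asymNorm w ^ 2 + q ^ 2 < 1 := by
    rw [← tripleNorm_sq]; nlinarith [tripleNorm_nonneg w]
  have hq : q ^ 2 < 1/2 := by
    have := pow_le_pow_left₀ (norm_nonneg _) ((norm_weightedL2_le w).trans (norm_le_asymNorm w)) 2
    linarith
  have hδ : ∀ᶠ δ in 𝓝 (0 : ℝ),
      asymNorm w ^ 2 + (q + δ) ^ 2 < 1 ∧ (t + 2 * δ) ^ 2 + (q + δ) ^ 2 < 1 := by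
    have h1 := (by fun_prop : Continuous fun δ : ℝ => asymNorm w ^ 2 + (q + δ) ^ 2).tendsto 0
    have h2 := (by fun_prop : Continuous fun δ : ℝ => (t + 2 * δ) ^ 2 + (q + δ) ^ 2).tendsto 0
    refine (h1.eventually (gt_mem_nhds ?_)).and (h2.eventually (gt_mem_nhds ?_)) <;>
      simp <;> linarith
  obtain ⟨δ, ⟨hδ1, hδ2⟩, hδ0 : 0 < δ⟩ := ((hδ.filter_mono nhdsWithin_le_nhds).and
    (self_mem_nhdsWithin : Set.Ioi (0 : ℝ) ∈ 𝓝[>] 0)).exists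
  obtain ⟨N, hN⟩ := eventually_atTop.1 <|
    (by simpa using hw.abs : Tendsto (fun k => |w k|) atTop (𝓝 0)).eventually (gt_mem_nhds hδ0)
  have hweight : Tendsto (fun n => t * √(weight n)) atTop (𝓝 0) := by
    simpa using (hasSum_weight.summable.tendsto_atTop_zero.sqrt).const_mul t
  filter_upwards [eventually_ge_atTop N, hweight.eventually (gt_mem_nhds hδ0)] with n hn hwn
  have hA := asymNorm_sub_smul_single_le ht0 fun k hk => (hN k (hn.trans hk)).le
  have hB : ‖weightedL2 (w - t • single n)‖ ≤ q + δ := by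
    rw [map_sub, map_smul]
    refine (norm_sub_le _ _).trans ?_
    rw [norm_smul, Real.norm_of_nonneg ht0, norm_weightedL2_single]
    linarith
  refine (tripleNorm_le_sqrt hA hB).trans (Real.sqrt_le_one.2 ?_)
  rcases le_total (asymNorm w) (t + 2 * δ) with h | h
  · rw [max_eq_right h]; exact hδ2.le
  · rw [max_eq_left h]; exact hδ1.le

lemma isBounded_slice (f : ℕ → ℝ) (a : ℝ) : Bornology.IsBounded (slice f a) :=
  isBounded_closedBall.subset fun u hu => by
    rw [mem_closedBall, dist_zero_right]
    exact (norm_le_tripleNorm u).trans hu.1.2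

lemma le_diam_slice {f : ℕ → ℝ} (hf : Summable fun n => |f n|) {a : ℝ} {u : ℕ →ᵇ ℝ}
    (hu : u ∈ slice f a) {t : ℝ} (ht0 : 0 ≤ t) (ht : t ^ 2 < 1/2) : t ≤ diam (slice f a) := by
  obtain ⟨⟨hu0, hu1⟩, hua⟩ := hu
  set F := ∑' k, f k * u k
  obtain ⟨s, has, hs0, hs1⟩ : ∃ s : ℝ, a < s * F ∧ 0 < s ∧ s < 1 :=
    (((tendsto_id.mul_const F).eventually (lt_mem_nhds (by simpa using hua))).filter_mono
      nhdsWithin_le_nhds |>.and (Ioo_mem_nhdsLT one_pos)).exists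
  have hw0 : Tendsto (s • u) atTop (𝓝 0) := by simpa using hu0.const_mul s
  have hw1 : tripleNorm (s • u) < 1 := by
    rw [tripleNorm_smul u hs0.le]; nlinarith
  have hwF : ∑' k, f k * (s • u) k = s * F := by
    simp only [BoundedContinuousFunction.coe_smul, smul_eq_mul, mul_left_comm, tsum_mul_left, F]
  have hf0 : Tendsto f atTop (𝓝 0) := by
    simpa using (tendsto_zero_iff_abs_tendsto_zero f).2 hf.tendsto_atTop_zero
  have hF : Tendsto (fun n => ∑' k, f k * (s • u - t • single n) k) atTop (𝓝 (s * F)) := by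
    simp_rw [tsum_mul_sub_smul_single hf, hwF]
    simpa using tendsto_const_nhds.sub (hf0.const_mul t)
  obtain ⟨n, hn1, hnF⟩ := ((eventually_tripleNorm_sub_smul_single_le_one hw0 hw1 ht0 ht).and
    (hF.eventually (lt_mem_nhds has))).exists
  calc t = dist (s • u) (s • u - t • single n) := by
        rw [dist_eq_norm, sub_sub_cancel, norm_smul_single ht0]
    _ ≤ diam (slice f a) := dist_le_diam_of_mem (isBounded_slice f a)
        ⟨⟨hw0, hw1.le⟩, hwF ▸ has⟩ ⟨⟨tendsto_sub_smul_single hw0 t n, hn1⟩, hnF⟩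

lemma one_div_sqrt_two_le_diam_slice {f : ℕ → ℝ} (hf : Summable fun n => |f n|) {a : ℝ}
    (hne : (slice f a).Nonempty) : 1 / √2 ≤ diam (slice f a) := by
  obtain ⟨u, hu⟩ := hne
  refine le_of_forall_lt_imp_le_of_dense fun t ht => ?_
  rcases lt_or_ge t 0 with ht0 | ht0
  · exact ht0.le.trans diam_nonneg
  · refine le_diam_slice hf hu ht0 ?_
    calc t ^ 2 < (1 / √2) ^ 2 := pow_lt_pow_left₀ ht ht0 two_ne_zero
      _ = 1 / 2 := by rw [div_pow, Real.sq_sqrt zero_le_two, one_pow]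

lemma not_forall_exists_slice_diam_lt (x : ℕ →ᵇ ℝ) :
    ¬ ∀ ε > (0 : ℝ), ∃ (f : ℕ → ℝ) (a : ℝ), Summable (fun n => |f n|) ∧ x ∈ slice f a ∧
      diam (slice f a) < ε := by
  intro h
  obtain ⟨f, a, hf, hx, hdiam⟩ := h (1 / 2) one_half_pos
  have : (1 : ℝ) / 2 < 1 / √2 :=
    lt_of_pow_lt_pow_left₀ 2 (by positivity) (by norm_num [div_pow])
  linarith [one_div_sqrt_two_le_diam_slice hf ⟨x, hx⟩]

end C0Gauge

end

theorem stmt18 :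
    ∃ p : (ℕ →ᵇ ℝ) → ℝ,
      (∀ (x : ℕ →ᵇ ℝ) (t : ℝ), 0 ≤ t → p (t • x) = t * p x) ∧
      (∀ x y : ℕ →ᵇ ℝ, p (x + y) ≤ p x + p y) ∧
      (∃ c C : ℝ, 0 < c ∧ ∀ x : ℕ →ᵇ ℝ, c * ‖x‖ ≤ p x ∧ p x ≤ C * ‖x‖) ∧
      (∀ x : ℕ →ᵇ ℝ, Tendsto (⇑x) atTop (nhds 0) → p x = 1 →
        ∀ (y z : ℕ → (ℕ →ᵇ ℝ)),
          (∀ n, Tendsto (⇑(y n)) atTop (nhds 0) ∧ p (y n) ≤ 1) →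
          (∀ n, Tendsto (⇑(z n)) atTop (nhds 0) ∧ p (z n) ≤ 1) →
          Tendsto (fun n => ‖x - (1/2 : ℝ) • (y n + z n)‖) atTop (nhds 0) →
          Tendsto (fun n => ‖y n - z n‖) atTop (nhds 0)) ∧
      (∀ f : ℕ → ℝ, Summable (fun n => |f n|) → ∀ a : ℝ,
        {u : ℕ →ᵇ ℝ | (Tendsto (⇑u) atTop (nhds 0) ∧ p u ≤ 1) ∧
            a < ∑' n : ℕ, f n * u n}.Nonempty →
        1 / Real.sqrt 2 ≤
          Metric.diam {u : ℕ →ᵇ ℝ | (Tendsto (⇑u) atTop (nhds 0) ∧ p u ≤ 1) ∧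
            a < ∑' n : ℕ, f n * u n}) ∧
      (∀ x : ℕ →ᵇ ℝ, Tendsto (⇑x) atTop (nhds 0) → p x = 1 →
        ¬ (∀ ε > (0 : ℝ), ∃ (f : ℕ → ℝ) (a : ℝ), Summable (fun n => |f n|) ∧
            x ∈ {u : ℕ →ᵇ ℝ | (Tendsto (⇑u) atTop (nhds 0) ∧ p u ≤ 1) ∧
              a < ∑' n : ℕ, f n * u n} ∧
            Metric.diam {u : ℕ →ᵇ ℝ | (Tendsto (⇑u) atTop (nhds 0) ∧ p u ≤ 1) ∧
              a < ∑' n : ℕ, f n * u n} < ε)) :=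
  ⟨C0Gauge.tripleNorm, fun x _ ht => C0Gauge.tripleNorm_smul x ht, C0Gauge.tripleNorm_add_le,
    ⟨1, 3, one_pos, fun x => ⟨(one_mul ‖x‖).symm ▸ C0Gauge.norm_le_tripleNorm x,
      C0Gauge.tripleNorm_le_three_mul_norm x⟩⟩,
    fun _ hx0 hx _ _ hy hz hmid => C0Gauge.tendsto_norm_sub_of_midpoint hx0 hx
      (fun n => (hy n).2) (fun n => (hz n).2) hmid,
    fun _ hf _ hne => C0Gauge.one_div_sqrt_two_le_diam_slice hf hne,
    fun x _ _ => C0Gauge.not_forall_exists_slice_diam_lt x⟩
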